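/- arXiv:2601.15463 — 7 statements merged into one kernel-verified Lean document; each statement's English description precedes it below -/
import Mathlib

section
/- For a pair of permutations ρ₁, ρ₂ of a finite set V, let G(ρ₁,ρ₂) be the directed multigraph with edges i→ρ₁(i) and i→ρ₂(i) for all i∈V, and let C(ρ₁,ρ₂) be its adjacency matrix (with entry 2 when ρ₁(i)=ρ₂(i)). Let ρ₀ = ρ₂∘ρ₁⁻¹. Then det C(ρ₁,ρ₂) = 0 if ρ₀ has at least one cycle of even length, and det C(ρ₁,ρ₂) = sign(ρ₁)·2^{c(ρ₀)} otherwise, where c(ρ₀) is the number of cycles of ρ₀ (including fixed points). -/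
/-! With `P σ` the permutation matrix of `σ` (`P σ i j = 1` iff `σ i = j`), the adjacency matrix is
`P ρ₁ + P ρ₂ = P ρ₁ * (1 + P ρ₀)`, so everything reduces to `det (1 + P σ)`.
For a cycle `σ` of length `ℓ`, the only permutations contributing to the Leibniz expansion of
`det (1 + P σ)` are `1` and `σ⁻¹`, which gives `2 ^ #(fixed points) * (1 - (-1) ^ ℓ)`.
For disjoint `σ`, `τ` one has `P σ + P τ = 1 + P (σ * τ)`, hence
`(1 + P σ) * (1 + P τ) = 2 • (1 + P (σ * τ))`, and induction over the cycle decomposition yields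
`det (1 + P σ) = 2 ^ #(fixed points) * ∏ (1 - (-1) ^ ℓ)`, the product running over the cycle
lengths `ℓ` of `σ`. -/

/-- The adjacency matrix of the graph `G(ρ₁,ρ₂)` with edges `i → ρ₁ i` and `i → ρ₂ i`. -/
def permPairAdjMatrix {V : Type*} [Fintype V] [DecidableEq V] (ρ₁ ρ₂ : Equiv.Perm V) :
    Matrix V V ℤ :=
  fun i j => (if ρ₁ i = j then 1 else 0) + (if ρ₂ i = j then 1 else 0)

/-- The number of cycles (orbits, including fixed points) of a permutation. -/
def cycleCount {V : Type*} [Fintype V] [DecidableEq V] (σ : Equiv.Perm V) : ℕ :=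
  (Fintype.card V - σ.cycleType.sum) + σ.cycleType.card

open Equiv Finset

namespace Equiv.Perm

variable {α : Type*}

theorem IsCycle.eq_one_or_eq_of_forall_apply_eq_or [Finite α] {σ τ : Perm α} (hσ : σ.IsCycle)
    (h : ∀ x, τ x = x ∨ τ x = σ x) : τ = 1 ∨ τ = σ := by
  refine or_iff_not_imp_left.2 fun hτ => ?_
  obtain ⟨x, hx⟩ : ∃ x, τ x ≠ x := by
    by_contra! hfix
    exact hτ (Perm.ext hfix)
  -- `τ` moves a point `y` to `σ y`; by injectivity it cannot fix `σ y` as well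
  have hmoved : ∀ y, τ y ≠ y → τ (σ y) ≠ σ y := fun y hy hσy =>
    hy (by rw [(h y).resolve_left hy, τ.injective (hσy.trans ((h y).resolve_left hy).symm)])
  have hpow : ∀ k : ℕ, τ ((σ ^ k) x) ≠ (σ ^ k) x := by
    intro k
    induction k with
    | zero => exact hx
    | succ k ih => rw [pow_succ', mul_apply]; exact hmoved _ ih
  ext y
  by_cases hy : σ y = y
  · rcases h y with h' | h' <;> simp [h', hy]
  · have hσx : σ x ≠ x := by rw [← (h x).resolve_left hx]; exact hx
    obtain ⟨k, rfl⟩ := hσ.exists_pow_eq hσx hy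
    exact (h _).resolve_left (hpow k)

variable [DecidableEq α]

theorem permMatrix_apply {R : Type*} [Zero R] [One R] (σ : Perm α) (i j : α) :
    σ.permMatrix R i j = if σ i = j then 1 else 0 := by
  simp [PEquiv.toMatrix_apply]

theorem one_add_permMatrix_apply {R : Type*} [AddMonoidWithOne R] (σ : Perm α) (i j : α) :
    (1 + σ.permMatrix R) i j = (if i = j then 1 else 0) + (if σ i = j then 1 else 0) := by
  rw [Matrix.add_apply, Matrix.one_apply, permMatrix_apply]

theorem Disjoint.permMatrix_add_permMatrix {R : Type*} [AddCommMonoidWithOne R]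
    {σ τ : Perm α} (h : σ.Disjoint τ) :
    σ.permMatrix R + τ.permMatrix R = 1 + (σ * τ).permMatrix R := by
  ext i j
  simp only [Matrix.add_apply, Matrix.one_apply, permMatrix_apply, mul_apply]
  rcases h i with hσ | hτ
  · have hστ : σ (τ i) = τ i := by
      rcases h (τ i) with h' | h'
      · exact h'
      · rw [τ.injective h', hσ]
    simp only [hσ, hστ]
  · simp only [hτ]
    exact add_comm _ _

variable [Fintype α]

theorem Disjoint.one_add_permMatrix_mul_one_add_permMatrix {R : Type*} [Semiring R]
    {σ τ : Perm α} (h : σ.Disjoint τ) :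
    (1 + σ.permMatrix R) * (1 + τ.permMatrix R) = (2 : R) • (1 + (σ * τ).permMatrix R) :=
  calc (1 + σ.permMatrix R) * (1 + τ.permMatrix R)
      = 1 + (σ.permMatrix R + τ.permMatrix R) + σ.permMatrix R * τ.permMatrix R := by
        simp only [add_mul, mul_add, one_mul, mul_one]; abel
    _ = 1 + (1 + (σ * τ).permMatrix R) + (σ * τ).permMatrix R := by
        rw [h.permMatrix_add_permMatrix, ← Matrix.permMatrix_mul, h.commute.eq]
    _ = (2 : R) • (1 + (σ * τ).permMatrix R) := by
        rw [two_smul]; abel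

theorem det_permMatrix_add_permMatrix {R : Type*} [CommRing R] (σ τ : Perm α) :
    (σ.permMatrix R + τ.permMatrix R).det =
      (sign σ : ℤ) * (1 + (τ * σ⁻¹).permMatrix R).det := by
  rw [← Matrix.det_permutation, ← Matrix.det_mul, mul_add, mul_one, ← Matrix.permMatrix_mul,
    inv_mul_cancel_right]

theorem det_one_add_permMatrix_of_isCycle {σ : Perm α} (hσ : σ.IsCycle) :
    (1 + σ.permMatrix ℤ).det = 2 ^ (Fintype.card α - #σ.support) * (1 - (-1) ^ #σ.support) := by
  rw [Matrix.det_apply']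
  simp only [Int.cast_id, one_add_permMatrix_apply]
  have hfix : ∀ τ ∈ ({1, σ⁻¹} : Finset (Perm α)),
      ∏ i, ((if τ i = i then 1 else 0) + (if σ (τ i) = i then 1 else 0) : ℤ) =
        2 ^ (Fintype.card α - #σ.support) := by
    have hcard : #{i | σ i = i} = Fintype.card α - #σ.support := by
      rw [← card_compl]; congr 1; ext; simp
    intro τ hτ
    rw [mem_insert, mem_singleton] at hτ
    rw [← hcard, ← prod_const, prod_filter]
    refine prod_congr rfl fun i _ => ?_
    rcases hτ with rfl | rfl
    · split_ifs <;> simp_all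
    · by_cases h : σ i = i
      · simp [h, symm_apply_eq]
      · simp [h, symm_apply_eq, Ne.symm h]
  have hvanish : ∀ τ ∉ ({1, σ⁻¹} : Finset (Perm α)),
      (sign τ : ℤ) * ∏ i, ((if τ i = i then 1 else 0) + (if σ (τ i) = i then 1 else 0) : ℤ) = 0 := by
    intro τ hτ
    obtain ⟨i, hi⟩ : ∃ i, ¬ (τ i = i ∨ τ i = σ⁻¹ i) := by
      by_contra! hall
      exact hτ (by
        rw [mem_insert, mem_singleton]; exact hσ.inv.eq_one_or_eq_of_forall_apply_eq_or hall)
    rw [prod_eq_zero (mem_univ i), mul_zero]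
    rw [not_or, Perm.eq_inv_iff_eq] at hi
    simp [hi]
  rw [← sum_subset (subset_univ _) fun τ _ => hvanish τ, sum_pair (inv_ne_one.2 hσ.ne_one).symm,
    hfix 1 (by simp), hfix σ⁻¹ (by simp), sign_inv, hσ.sign, sign_one]
  push_cast
  ring

theorem det_one_add_permMatrix (σ : Perm α) :
    (1 + σ.permMatrix ℤ).det =
      2 ^ (Fintype.card α - σ.cycleType.sum) * (σ.cycleType.map fun ℓ => 1 - (-1) ^ ℓ).prod := by
  induction σ using cycle_induction_on with
  | base_one =>
    rw [Matrix.permMatrix_one, ← two_smul ℤ, Matrix.det_smul, Matrix.det_one]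
    simp
  | base_cycles σ hσ => rw [det_one_add_permMatrix_of_isCycle hσ, hσ.cycleType]; simp
  | induction_disjoint σ τ hd _ ihσ ihτ =>
    have hmul : (1 + σ.permMatrix ℤ).det * (1 + τ.permMatrix ℤ).det =
        2 ^ Fintype.card α * (1 + (σ * τ).permMatrix ℤ).det := by
      rw [← Matrix.det_mul, hd.one_add_permMatrix_mul_one_add_permMatrix, Matrix.det_smul]
    have hle := sum_cycleType_le (σ * τ)
    rw [hd.cycleType_mul, Multiset.sum_add] at hle
    have hpow : (2 : ℤ) ^ (Fintype.card α - σ.cycleType.sum) *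
        2 ^ (Fintype.card α - τ.cycleType.sum) =
        2 ^ Fintype.card α * 2 ^ (Fintype.card α - (σ.cycleType.sum + τ.cycleType.sum)) := by
      rw [← pow_add, ← pow_add]; congr 1; omega
    apply mul_left_cancel₀ (pow_ne_zero (Fintype.card α) (two_ne_zero : (2 : ℤ) ≠ 0))
    rw [← hmul, ihσ, ihτ, hd.cycleType_mul, Multiset.sum_add, Multiset.map_add, Multiset.prod_add]
    linear_combination ((σ.cycleType.map fun ℓ => 1 - (-1 : ℤ) ^ ℓ).prod *
      (τ.cycleType.map fun ℓ => 1 - (-1 : ℤ) ^ ℓ).prod) * hpow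

theorem det_one_add_permMatrix_eq_zero {σ : Perm α} (h : ∃ ℓ ∈ σ.cycleType, Even ℓ) :
    (1 + σ.permMatrix ℤ).det = 0 := by
  obtain ⟨ℓ, hℓ, heven⟩ := h
  rw [det_one_add_permMatrix,
    Multiset.prod_eq_zero (Multiset.mem_map.2 ⟨ℓ, hℓ, by simp [heven.neg_one_pow]⟩), mul_zero]

theorem det_one_add_permMatrix_of_forall_odd {σ : Perm α} (h : ∀ ℓ ∈ σ.cycleType, Odd ℓ) :
    (1 + σ.permMatrix ℤ).det = 2 ^ cycleCount σ := by
  have hfactor : ∀ ℓ ∈ σ.cycleType, 1 - (-1 : ℤ) ^ ℓ = 2 := fun ℓ hℓ => by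
    rw [(h ℓ hℓ).neg_one_pow]; norm_num
  rw [det_one_add_permMatrix, Multiset.map_congr rfl hfactor, Multiset.map_const',
    Multiset.prod_replicate, cycleCount, pow_add]

end Equiv.Perm

theorem permPairAdjMatrix_eq_add {V : Type*} [Fintype V] [DecidableEq V] (ρ₁ ρ₂ : Perm V) :
    permPairAdjMatrix ρ₁ ρ₂ = ρ₁.permMatrix ℤ + ρ₂.permMatrix ℤ := by
  ext i j
  simp only [permPairAdjMatrix, Matrix.add_apply, Perm.permMatrix_apply]

theorem det_permPairAdjMatrix {V : Type*} [Fintype V] [DecidableEq V]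
    (ρ₁ ρ₂ : Equiv.Perm V) (ρ₀ : Equiv.Perm V) (hρ₀ : ρ₀ = ρ₂ * ρ₁⁻¹) :
    ((∃ l ∈ ρ₀.cycleType, Even l) → (permPairAdjMatrix ρ₁ ρ₂).det = 0) ∧
    ((∀ l ∈ ρ₀.cycleType, Odd l) →
      (permPairAdjMatrix ρ₁ ρ₂).det = (Equiv.Perm.sign ρ₁ : ℤ) * 2 ^ cycleCount ρ₀) := by
  have hdet : (permPairAdjMatrix ρ₁ ρ₂).det = (Perm.sign ρ₁ : ℤ) * (1 + ρ₀.permMatrix ℤ).det := by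
    rw [permPairAdjMatrix_eq_add, Perm.det_permMatrix_add_permMatrix, hρ₀, Int.cast_id]
  refine ⟨fun h => ?_, fun h => ?_⟩
  · rw [hdet, Perm.det_one_add_permMatrix_eq_zero h, mul_zero]
  · rw [hdet, Perm.det_one_add_permMatrix_of_forall_odd h]
end

section
/- Let ζ be a primitive d-th root of unity with d > 1 odd, let ℓ be the multiplicative order of 2 modulo d, and let z be any power of ζ other than 1. Then ∏_{t=0}^{ℓ−1} (z^{2^t} + z^{−2^t}) = 1. -/
theorem prod_cycle_weights_eq_one (d : ℕ) (hd : 1 < d) (hodd : Odd d)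
    (ζ : ℂ) (hζ : IsPrimitiveRoot ζ d) (ℓ : ℕ) (hℓ : ℓ = orderOf (2 : ZMod d))
    (j : ℕ) (z : ℂ) (hz : z = ζ ^ j) (hz1 : z ≠ 1) :
    ∏ t ∈ Finset.range ℓ, (z ^ (2 ^ t) + (z ^ (2 ^ t))⁻¹) = 1 := by
  have hd0 : 0 < d := by omega
  have hzd : z ^ d = 1 := by
    rw [hz, ← pow_mul, mul_comm, pow_mul, hζ.pow_eq_one, one_pow]
  have hz0 : z ≠ 0 := by
    intro h; rw [h, zero_pow hd0.ne'] at hzd; exact one_ne_zero hzd.symm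
  have hzne : z ≠ -1 := by
    intro h
    rw [h, hodd.neg_one_pow] at hzd
    norm_num at hzd
  have hsq : z - z⁻¹ ≠ 0 := by
    intro h
    have h2 : z * z = 1 := by
      have h3 := sub_eq_zero.mp h
      field_simp at h3
      linear_combination h3
    have h4 : (z - 1) * (z + 1) = 0 := by linear_combination h2
    rcases mul_eq_zero.mp h4 with h' | h'
    · exact hz1 (sub_eq_zero.mp h')
    · exact hzne (eq_neg_of_add_eq_zero_left h')
  have hpow : (2 : ZMod d) ^ ℓ = 1 := by
    rw [hℓ]; exact pow_orderOf_eq_one _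
  have hdvd : d ∣ 2 ^ ℓ - 1 := by
    have : ((2 ^ ℓ : ℕ) : ZMod d) = ((1 : ℕ) : ZMod d) := by push_cast; simpa using hpow
    have hmod := (ZMod.natCast_eq_natCast_iff _ _ _).mp this
    have h1 : 1 ≤ 2 ^ ℓ := Nat.one_le_two_pow
    exact (Nat.modEq_iff_dvd' h1).mp hmod.symm
  have hzℓ : z ^ (2 ^ ℓ) = z := by
    obtain ⟨k, hk⟩ := hdvd
    have h1 : 1 ≤ 2 ^ ℓ := Nat.one_le_two_pow
    have : 2 ^ ℓ = d * k + 1 := by omega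
    rw [this, pow_add, pow_mul, hzd, one_pow, pow_one, one_mul]
  -- telescoping
  have key : ∀ n : ℕ, (∏ t ∈ Finset.range n, (z ^ (2 ^ t) + (z ^ (2 ^ t))⁻¹)) * (z - z⁻¹)
      = z ^ (2 ^ n) - (z ^ (2 ^ n))⁻¹ := by
    intro n
    induction n with
    | zero => simp
    | succ n ih =>
      rw [Finset.prod_range_succ, mul_right_comm, ih]
      have hzp : z ^ (2 ^ n) ≠ 0 := pow_ne_zero _ hz0
      have hzp2 : z ^ (2 ^ (n + 1)) ≠ 0 := pow_ne_zero _ hz0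
      have hsq2 : z ^ (2 ^ (n + 1)) = (z ^ (2 ^ n)) ^ 2 := by
        rw [← pow_mul, pow_succ, mul_comm]
      field_simp
      rw [hsq2]; ring
  have := key ℓ
  rw [hzℓ] at this
  exact mul_right_cancel₀ hsq (by rw [this, one_mul])
end

section
/- Let N be odd and not divisible by 3, and define π₀(n) = 3n + 2⁻¹ (mod N). Then the number of orbits of π₀ on ℤ/N equals ∑_{d | N} φ(d)/ord_d(3), where φ is Euler's totient and ord_1(3) := 1. -/
section aux

variable {N : ℕ} [NeZero N]

private lemma pow_mul_eq_self_iff (x : ZMod N) (k : ℕ) :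
    (3 : ZMod N) ^ k * x = x ↔ orderOf (3 : ZMod (addOrderOf x)) ∣ k := by
  have hx : (1 : ℕ) ≤ 3 ^ k := Nat.one_le_pow _ _ (by norm_num)
  have h1 : ((3 : ZMod N) ^ k * x = x) ↔ ((3 ^ k - 1 : ℕ) : ZMod N) * x = 0 := by
    rw [Nat.cast_sub hx]
    push_cast
    rw [sub_mul, one_mul, sub_eq_zero]
  have h2 : (3 : ZMod (addOrderOf x)) ^ k = 1 ↔
      ((3 ^ k : ℕ) : ZMod (addOrderOf x)) = ((1 : ℕ) : ZMod (addOrderOf x)) := by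
    push_cast; rfl
  rw [h1, ← nsmul_eq_mul, ← addOrderOf_dvd_iff_nsmul_eq_zero,
    orderOf_dvd_iff_pow_eq_one, h2, ZMod.natCast_eq_natCast_iff]
  constructor
  · intro h
    exact (Nat.modEq_iff_dvd' hx).mpr h |>.symm
  · intro h
    exact (Nat.modEq_iff_dvd' hx).mp h.symm

private lemma addOrderOf_unit_mul (u : (ZMod N)ˣ) (x : ZMod N) :
    addOrderOf ((u : ZMod N) * x) = addOrderOf x := by
  have key : ∀ n : ℕ, n • ((u : ZMod N) * x) = 0 ↔ n • x = 0 := by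
    intro n
    rw [nsmul_eq_mul, nsmul_eq_mul, mul_left_comm, Units.mul_right_eq_zero]
  exact Nat.dvd_antisymm
    (addOrderOf_dvd_iff_nsmul_eq_zero.mpr ((key _).mpr (addOrderOf_nsmul_eq_zero x)))
    (addOrderOf_dvd_iff_nsmul_eq_zero.mpr ((key _).mp (addOrderOf_nsmul_eq_zero _)))

end aux

theorem pi0_cycleCount (N : ℕ) [NeZero N] (hodd : Odd N) (h3 : ¬ 3 ∣ N)
    (π₀ : Equiv.Perm (ZMod N))
    (hπ₀ : ∀ n : ZMod N, π₀ n = 3 * n + (2 : ZMod N)⁻¹) :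
    cycleCount π₀ = ∑ d ∈ N.divisors, Nat.totient d / orderOf (3 : ZMod d) := by
  classical
  have hc3 : Nat.Coprime 3 N := (Nat.Prime.coprime_iff_not_dvd Nat.prime_three).mpr h3
  set u : (ZMod N)ˣ := ZMod.unitOfCoprime 3 hc3 with hu_def
  have hu : (u : ZMod N) = 3 := by
    rw [hu_def, ZMod.coe_unitOfCoprime]; norm_num
  set μ : Equiv.Perm (ZMod N) := MulAction.toPermHom (ZMod N)ˣ (ZMod N) u with hμ_def
  have hμz : ∀ (n : ℤ) (x : ZMod N), (μ ^ n) x = ((u ^ n : (ZMod N)ˣ) : ZMod N) * x := by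
    intro n x
    rw [hμ_def, ← map_zpow]
    rfl
  have hμpow : ∀ (n : ℕ) (x : ZMod N), (μ ^ n) x = (3 : ZMod N) ^ n * x := by
    intro n x
    rw [hμ_def, ← map_pow]
    show ((u ^ n : (ZMod N)ˣ) : ZMod N) * x = _
    rw [Units.val_pow_eq_pow_val, hu]
  have hμ1 : ∀ x, μ x = 3 * x := fun x => by simpa using hμpow 1 x
  -- 2 is a unit
  have hc2 : Nat.Coprime 2 N :=
    (Nat.prime_two.coprime_iff_not_dvd).mpr (Nat.two_dvd_ne_zero.mpr (Nat.odd_iff.mp hodd))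
  have hU2 : IsUnit (2 : ZMod N) := by
    have := (ZMod.isUnit_iff_coprime 2 N).mpr hc2
    simpa using this
  have h2inv : (2 : ZMod N) * (2 : ZMod N)⁻¹ = 1 := ZMod.mul_inv_of_unit _ hU2
  -- conjugation
  set a : ZMod N := -((2 : ZMod N)⁻¹ * (2 : ZMod N)⁻¹) with ha_def
  have hconj : π₀ = (Equiv.addLeft a) * μ * (Equiv.addLeft a)⁻¹ := by
    ext n
    rw [hπ₀ n]
    simp only [Equiv.Perm.mul_apply, hμ1]
    show 3 * n + (2 : ZMod N)⁻¹ = Equiv.addLeft a (3 * ((Equiv.addLeft a)⁻¹ n))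
    simp only [Equiv.Perm.inv_def, Equiv.addLeft_symm, Equiv.coe_addLeft, ha_def]
    ring_nf
    linear_combination (-(2 : ZMod N)⁻¹) * h2inv
  have hct : π₀.cycleType = μ.cycleType := by rw [hconj]; exact Equiv.Perm.cycleType_conj
  -- support of μ
  have hsupp : μ.support = {(0 : ZMod N)}ᶜ := by
    ext x
    simp only [Equiv.Perm.mem_support, Finset.mem_compl, Finset.mem_singleton, hμ1]
    have h30 : (3 : ZMod N) * x = x ↔ (2 : ZMod N) * x = 0 := by
      constructor <;> intro h <;> linear_combination h
    rw [ne_eq, h30, hU2.mul_right_eq_zero]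
  have hsuppcard : μ.support.card = N - 1 := by
    rw [hsupp, Finset.card_compl, Finset.card_singleton, ZMod.card]
  -- orbit size
  have horbit : ∀ c ∈ μ.cycleFactorsFinset, ∀ x ∈ c.support,
      c.support.card = orderOf (3 : ZMod (addOrderOf x)) := by
    intro c hc x hx
    have hcx : c = μ.cycleOf x := Equiv.Perm.cycle_is_cycleOf hx hc
    have hcyc := Equiv.Perm.isCycleOn_support_cycleOf μ x
    have hx' : x ∈ (μ.cycleOf x).support := hcx ▸ hx
    have key : ∀ n : ℕ,
        ((μ.cycleOf x).support.card ∣ n ↔ orderOf (3 : ZMod (addOrderOf x)) ∣ n) := by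
      intro n
      rw [← hcyc.pow_apply_eq hx', hμpow, pow_mul_eq_self_iff]
    rw [hcx]
    exact Nat.dvd_antisymm ((key _).mpr dvd_rfl) ((key _).mp dvd_rfl)
  -- all points of a cycle share addOrderOf
  have hsame : ∀ c ∈ μ.cycleFactorsFinset, ∀ x ∈ c.support, ∀ y ∈ c.support,
      addOrderOf x = addOrderOf y := by
    intro c hc x hx y hy
    have hcx : c = μ.cycleOf x := Equiv.Perm.cycle_is_cycleOf hx hc
    have hsc : μ.SameCycle x y := (Equiv.Perm.mem_support_cycleOf_iff.mp (hcx ▸ hy)).1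
    obtain ⟨i, hi⟩ := hsc
    rw [← hi, hμz i x, addOrderOf_unit_mul]
  -- fiber function
  set f : Equiv.Perm (ZMod N) → ℕ :=
    fun c => if h : c.support.Nonempty then addOrderOf h.choose else 0 with hf
  have hfc : ∀ c ∈ μ.cycleFactorsFinset, ∀ x ∈ c.support, f c = addOrderOf x := by
    intro c hc x hx
    have hne : c.support.Nonempty := ⟨x, hx⟩
    rw [hf]
    simp only [dif_pos hne]
    exact hsame c hc hne.choose hne.choose_spec x hx
  have hdvdN : ∀ x : ZMod N, addOrderOf x ∣ N := fun x => by
    have := addOrderOf_dvd_card (x := x)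
    rwa [ZMod.card] at this
  have hne_supp : ∀ c ∈ μ.cycleFactorsFinset, c.support.Nonempty := by
    intro c hc
    rw [Finset.nonempty_iff_ne_empty]
    intro h
    exact (Equiv.Perm.mem_cycleFactorsFinset_iff.mp hc).1.ne_one
      (Equiv.Perm.support_eq_empty_iff.mp h)
  have hmaps : ∀ c ∈ μ.cycleFactorsFinset, f c ∈ N.divisors.erase 1 := by
    intro c hc
    obtain ⟨x, hx⟩ := hne_supp c hc
    rw [hfc c hc x hx, Finset.mem_erase, Nat.mem_divisors]
    have hx0 : x ≠ 0 := by
      have hxs := Equiv.Perm.mem_cycleFactorsFinset_support_le hc hx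
      rw [hsupp] at hxs
      simpa using hxs
    refine ⟨?_, hdvdN x, NeZero.ne N⟩
    simpa [AddMonoid.addOrderOf_eq_one_iff] using hx0
  have hcard : μ.cycleFactorsFinset.card =
      ∑ d ∈ N.divisors.erase 1, (μ.cycleFactorsFinset.filter (fun c => f c = d)).card :=
    Finset.card_eq_sum_card_fiberwise hmaps
  have hfiber : ∀ d ∈ N.divisors.erase 1,
      (μ.cycleFactorsFinset.filter (fun c => f c = d)).card
        = Nat.totient d / orderOf (3 : ZMod d) := by
    intro d hd
    rw [Finset.mem_erase, Nat.mem_divisors] at hd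
    obtain ⟨hd1, hdN, -⟩ := hd
    haveI hdne : NeZero d := ⟨by rintro rfl; exact (NeZero.ne N) (zero_dvd_iff.mp hdN)⟩
    have hu3d : IsUnit (3 : ZMod d) := by
      have := (ZMod.isUnit_iff_coprime 3 d).mpr (hc3.coprime_dvd_right hdN)
      simpa using this
    have hmpos : 0 < orderOf (3 : ZMod d) := by
      rw [← hu3d.unit_spec, orderOf_units]
      exact orderOf_pos _
    set F := μ.cycleFactorsFinset.filter (fun c => f c = d) with hF
    have hFmem : ∀ c ∈ F, c ∈ μ.cycleFactorsFinset ∧ f c = d := by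
      intro c hcF; exact Finset.mem_filter.mp hcF
    have hsupps : ∀ c ∈ F, c.support.card = orderOf (3 : ZMod d) := by
      intro c hcF
      obtain ⟨hc, hfd⟩ := hFmem c hcF
      obtain ⟨x, hx⟩ := hne_supp c hc
      have hdx : addOrderOf x = d := by rw [← hfc c hc x hx, hfd]
      rw [horbit c hc x hx, hdx]
    have hbiU : F.biUnion (fun c => c.support)
        = Finset.univ.filter (fun x => addOrderOf x = d) := by
      ext x
      simp only [Finset.mem_biUnion, Finset.mem_filter, Finset.mem_univ, true_and]
      constructor
      · rintro ⟨c, hcF, hx⟩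
        obtain ⟨hc, hfd⟩ := hFmem c hcF
        rw [← hfd]
        exact (hfc c hc x hx).symm
      · intro hdx
        have hx0 : x ≠ 0 := by
          rintro rfl
          rw [addOrderOf_zero] at hdx
          exact hd1 hdx.symm
        have hxs : x ∈ μ.support := by rw [hsupp]; simpa using hx0
        have hmem := Equiv.Perm.cycleOf_mem_cycleFactorsFinset_iff.mpr hxs
        have hxc : x ∈ (μ.cycleOf x).support :=
          Equiv.Perm.mem_support_cycleOf_iff.mpr ⟨Equiv.Perm.SameCycle.refl _ _, hxs⟩
        refine ⟨μ.cycleOf x, Finset.mem_filter.mpr ⟨hmem, ?_⟩, hxc⟩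
        rw [hfc _ hmem x hxc, hdx]
    have hcardF : (F.biUnion (fun c => c.support)).card = ∑ c ∈ F, c.support.card := by
      refine Finset.card_biUnion ?_
      intro p hp q hq hpq
      exact Equiv.Perm.Disjoint.disjoint_support
        ((Equiv.Perm.cycleFactorsFinset_pairwise_disjoint μ) (hFmem p hp).1 (hFmem q hq).1 hpq)
    have htot : Nat.totient d = F.card * orderOf (3 : ZMod d) := by
      have hcyclic := IsAddCyclic.card_addOrderOf_eq_totient (α := ZMod N) (d := d)
        (by rw [ZMod.card]; exact hdN)
      calc Nat.totient d = (Finset.univ.filter (fun x : ZMod N => addOrderOf x = d)).card := by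
            exact hcyclic.symm
        _ = ∑ c ∈ F, c.support.card := by rw [← hbiU, hcardF]
        _ = F.card * orderOf (3 : ZMod d) := by
            rw [Finset.sum_congr rfl hsupps, Finset.sum_const, smul_eq_mul]
    rw [htot, Nat.mul_div_cancel _ hmpos]
  -- assemble
  have hcyC : Multiset.card μ.cycleType = μ.cycleFactorsFinset.card := by
    rw [Equiv.Perm.cycleType_def, Multiset.card_map]
    rfl
  have hfix : Fintype.card (ZMod N) - μ.cycleType.sum = 1 := by
    rw [Equiv.Perm.sum_cycleType, hsuppcard, ZMod.card]
    have : 1 ≤ N := Nat.one_le_iff_ne_zero.mpr (NeZero.ne N)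
    omega
  have h1term : Nat.totient 1 / orderOf (3 : ZMod 1) = 1 := by
    have : orderOf (3 : ZMod 1) = 1 := orderOf_eq_one_iff.mpr (Subsingleton.elim _ _)
    rw [this, Nat.totient_one]
  rw [cycleCount, hct, hfix, hcyC, hcard,
    ← Finset.add_sum_erase _ _ (Nat.one_mem_divisors.mpr (NeZero.ne N)), h1term]
  congr 1
  exact Finset.sum_congr rfl hfiber
end

section
/- Let N be an odd integer not divisible by 3. Define permutations of ℤ/N by π₂(n) = 2⁻¹n and π₃(n) = 2⁻¹(3n+1). Then the group generated by π₂ and π₃ contains all translations n ↦ n + β of ℤ/N; in particular the modular Collatz graph on ℤ/N with edges n → π₂(n) and n → π₃(n) is strongly connected. -/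
private lemma addRight_pow' {A : Type*} [AddCommGroup A] (a : A) (k : ℕ) :
    (Equiv.addRight a) ^ k = Equiv.addRight (k • a) := by
  induction k with
  | zero => ext x; simp
  | succ n ih =>
      rw [pow_succ, ih, succ_nsmul]
      ext x
      simp only [Equiv.Perm.coe_mul, Function.comp_apply, Equiv.coe_addRight]
      rw [add_assoc, add_comm a (n • a)]

theorem collatz_translations_and_connected (N : ℕ) [NeZero N] (hodd : Odd N) (h3 : ¬ 3 ∣ N)
    (π₂ π₃ : Equiv.Perm (ZMod N))
    (hπ₂ : ∀ n : ZMod N, π₂ n = (2 : ZMod N)⁻¹ * n)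
    (hπ₃ : ∀ n : ZMod N, π₃ n = (2 : ZMod N)⁻¹ * (3 * n + 1)) :
    (∀ β : ZMod N, Equiv.addRight β ∈ Subgroup.closure {π₂, π₃}) ∧
    (∀ a b : ZMod N, Relation.ReflTransGen (fun x y => y = π₂ x ∨ y = π₃ x) a b) := by
  have h2u : IsUnit (2 : ZMod N) := by
    have : ((2 : ℕ) : ZMod N) = (2 : ZMod N) := by push_cast; ring
    rw [← this, ZMod.isUnit_iff_coprime]
    exact (Nat.prime_two.coprime_iff_not_dvd).2
      (fun h => Nat.not_even_iff_odd.mpr hodd (even_iff_two_dvd.mpr h))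
  have h3u : IsUnit (3 : ZMod N) := by
    have : ((3 : ℕ) : ZMod N) = (3 : ZMod N) := by push_cast; ring
    rw [← this, ZMod.isUnit_iff_coprime]
    exact (Nat.prime_three.coprime_iff_not_dvd).2 h3
  have h2i : (2 : ZMod N)⁻¹ * 2 = 1 := ZMod.inv_mul_of_unit _ h2u
  have h2i' : (2 : ZMod N) * 2⁻¹ = 1 := ZMod.mul_inv_of_unit _ h2u
  have h3i : (3 : ZMod N)⁻¹ * 3 = 1 := ZMod.inv_mul_of_unit _ h3u
  have h3i' : (3 : ZMod N) * 3⁻¹ = 1 := ZMod.mul_inv_of_unit _ h3u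
  set u : ZMod N := (2 : ZMod N)⁻¹ with hu
  -- inverse formulas
  have hπ₂inv : ∀ x : ZMod N, π₂⁻¹ x = 2 * x := by
    intro x
    rw [Equiv.Perm.inv_def, Equiv.symm_apply_eq, hπ₂, ← mul_assoc, h2i, one_mul]
  have hπ₃inv : ∀ x : ZMod N, π₃⁻¹ x = 3⁻¹ * (2 * x - 1) := by
    intro x
    rw [Equiv.Perm.inv_def, Equiv.symm_apply_eq, hπ₃, ← mul_assoc 3, h3i', one_mul,
      sub_add_cancel, ← mul_assoc, hu, h2i, one_mul]
  -- the commutator is translation by -u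
  have hcomm : π₃ * π₂⁻¹ * π₃⁻¹ * π₂ = Equiv.addRight (-u) := by
    ext n
    have e1 : (π₃ * π₂⁻¹ * π₃⁻¹ * π₂) n = π₃ (π₂⁻¹ (π₃⁻¹ (π₂ n))) := rfl
    rw [e1, hπ₂ n, hπ₃inv, hπ₂inv, hπ₃]
    have : (2 : ZMod N) * (u * n) = n := by rw [← mul_assoc, hu, h2i', one_mul]
    rw [this]
    have : (3 : ZMod N) * (2 * (3⁻¹ * (n - 1))) = 2 * (n - 1) := by
      rw [mul_left_comm, ← mul_assoc 3, h3i', one_mul]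
    rw [this]
    have : u * (2 * (n - 1) + 1) = n + -u := by
      linear_combination n * h2i'
    rw [this]
    simp [Equiv.addRight, sub_eq_add_neg]
  have hmem₂ : π₂ ∈ Subgroup.closure ({π₂, π₃} : Set (Equiv.Perm (ZMod N))) :=
    Subgroup.subset_closure (by simp)
  have hmem₃ : π₃ ∈ Subgroup.closure ({π₂, π₃} : Set (Equiv.Perm (ZMod N))) :=
    Subgroup.subset_closure (by simp)
  have htmem : Equiv.addRight (-u) ∈ Subgroup.closure ({π₂, π₃} : Set (Equiv.Perm (ZMod N))) := by
    rw [← hcomm]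
    exact mul_mem (mul_mem (mul_mem hmem₃ (inv_mem hmem₂)) (inv_mem hmem₃)) hmem₂
  have htrans : ∀ β : ZMod N, Equiv.addRight β ∈
      Subgroup.closure ({π₂, π₃} : Set (Equiv.Perm (ZMod N))) := by
    intro β
    have key : Equiv.addRight β = (Equiv.addRight (-u)) ^ ((-2 : ZMod N) * β).val := by
      rw [addRight_pow']
      congr 1
      rw [nsmul_eq_mul]
      rw [ZMod.natCast_val, ZMod.cast_id]
      have : (-2 : ZMod N) * β * -u = (2 * u) * β := by ring
      rw [this, hu, h2i', one_mul]
    rw [key]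
    exact pow_mem htmem _
  refine ⟨htrans, ?_⟩
  set R : ZMod N → ZMod N → Prop := fun x y => y = π₂ x ∨ y = π₃ x with hR
  have fwd_pow : ∀ (f : Equiv.Perm (ZMod N)), (∀ x, R x (f x)) →
      ∀ (k : ℕ) (x : ZMod N), Relation.ReflTransGen R x ((f ^ k) x) := by
    intro f hf k
    induction k with
    | zero => intro x; simp [Relation.ReflTransGen.refl]
    | succ n ih =>
        intro x
        have : (f ^ (n + 1)) x = f ((f ^ n) x) := by
          rw [pow_succ']; rfl
        rw [this]
        exact (ih x).tail (hf _)
  have back : ∀ (f : Equiv.Perm (ZMod N)), (∀ x, R x (f x)) →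
      ∀ x : ZMod N, Relation.ReflTransGen R (f x) x := by
    intro f hf x
    have hpos : 0 < orderOf f := orderOf_pos f
    have := fwd_pow f hf (orderOf f - 1) (f x)
    have heq : (f ^ (orderOf f - 1)) (f x) = x := by
      have : (f ^ (orderOf f - 1)) (f x) = (f ^ (orderOf f - 1) * f) x := rfl
      rw [this, ← pow_succ, Nat.sub_add_cancel hpos, pow_orderOf_eq_one]
      rfl
    rwa [heq] at this
  have hf₂ : ∀ x, R x (π₂ x) := fun x => Or.inl rfl
  have hf₃ : ∀ x, R x (π₃ x) := fun x => Or.inr rfl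
  have main : ∀ g ∈ Subgroup.closure ({π₂, π₃} : Set (Equiv.Perm (ZMod N))),
      ∀ a : ZMod N, Relation.ReflTransGen R a (g a) ∧ Relation.ReflTransGen R (g a) a := by
    intro g hg
    induction hg using Subgroup.closure_induction with
    | mem x hx =>
        intro a
        rcases hx with h | h
        · rw [h]; exact ⟨Relation.ReflTransGen.single (hf₂ a), back π₂ hf₂ a⟩
        · simp only [Set.mem_singleton_iff] at h
          rw [h]; exact ⟨Relation.ReflTransGen.single (hf₃ a), back π₃ hf₃ a⟩
    | one => intro a; exact ⟨Relation.ReflTransGen.refl, Relation.ReflTransGen.refl⟩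
    | mul x y hx hy ihx ihy =>
        intro a
        have e : (x * y) a = x (y a) := rfl
        rw [e]
        exact ⟨(ihy a).1.trans (ihx (y a)).1, (ihx (y a)).2.trans (ihy a).2⟩
    | inv x hx ihx =>
        intro a
        have e : x (x⁻¹ a) = a := by simp
        refine ⟨?_, ?_⟩
        · have := (ihx (x⁻¹ a)).2
          rwa [e] at this
        · have := (ihx (x⁻¹ a)).1
          rwa [e] at this
  intro a b
  have hg := htrans (b - a)
  have := (main _ hg a).1
  simpa using this
end

section
/- Let N be even and let C_N be the N×N adjacency matrix of the modular Collatz graph mod N (entry c_{i,j} counts n ∈ {0,…,2N−1} with n ≡ i mod N and T(n) ≡ j mod N, where T(n) = n/2 for even n and T(n) = (3n+1)/2 for odd n). Then c_{i,j} = c_{i, j+N/2 mod N} for all i,j; consequently det C_N = 0 and rank C_N = N/2. -/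
/-- The Collatz function. -/
def collatzT (n : ℕ) : ℕ := if n % 2 = 0 then n / 2 else (3 * n + 1) / 2

/-- Adjacency matrix of the modular Collatz graph mod `N` (entries in ℚ):
`c i j` counts `n ∈ {0,…,2N−1}` with `n ≡ i` and `T n ≡ j (mod N)`. -/
def collatzMatQ (N : ℕ) : Matrix (Fin N) (Fin N) ℚ :=
  fun i j =>
    (((Finset.range (2 * N)).filter
      (fun n => n % N = i.val ∧ collatzT n % N = j.val)).card : ℚ)

/-!
Write `N = 2h`. The residue class of `i` in `{0,…,2N−1}` is `{i, i + N}`, and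
`T (i + N) ≡ T i + h (mod N)`, so row `i` of `C_N` has a `1` exactly in the two columns
`j ≡ T i (mod h)`. Hence `C_N` is the matrix `[T i ≡ j (mod h)]`, obtained from the `h × h`
identity by composing rows and columns with surjections onto `ℤ/h`. Its rank is therefore
`h < N`, so `det C_N = 0`, and column `j` agrees with column `j + h`.
-/

namespace Matrix

theorem rank_one_submatrix_of_surjective {m n p R : Type*} [Fintype n] [DecidableEq n]
    [Fintype p] [CommRing R] [StrongRankCondition R] {f : m → n} {g : p → n}
    (hf : f.Surjective) (hg : g.Surjective) :
    ((1 : Matrix n n R).submatrix f g).rank = Fintype.card n := by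
  refine le_antisymm ((rank_submatrix_le _ f g).trans rank_one.le) ?_
  have hsection : ((1 : Matrix n n R).submatrix f g).submatrix
      (Function.surjInv hf) (Function.surjInv hg) = 1 := by
    rw [submatrix_submatrix, (Function.rightInverse_surjInv hf).comp_eq_id,
      (Function.rightInverse_surjInv hg).comp_eq_id, submatrix_id_id]
  have := rank_submatrix_le ((1 : Matrix n n R).submatrix f g)
    (Function.surjInv hf) (Function.surjInv hg)
  rwa [hsection, rank_one] at this

end Matrix

namespace Nat

theorem mod_eq_ite_of_lt_two_mul {x m : ℕ} (hx : x < 2 * m) :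
    x % m = if x < m then x else x - m := by
  split_ifs with hxm
  · exact Nat.mod_eq_of_lt hxm
  · rw [Nat.mod_eq_sub_mod (by omega), Nat.mod_eq_of_lt (by omega)]

theorem ite_mod_two_mul_add_ite_add_mod_two_mul_eq_ite {a j h : ℕ} (hj : j < 2 * h) :
    ((if a % (2 * h) = j then 1 else 0) + if (a + h) % (2 * h) = j then 1 else 0) =
      if a % h = j % h then 1 else 0 := by
  have hr : a % (2 * h) < 2 * h := Nat.mod_lt _ (by omega)
  rw [← Nat.mod_add_mod, ← Nat.mod_mod_of_dvd a (dvd_mul_left h 2)]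
  rw [mod_eq_ite_of_lt_two_mul (x := a % (2 * h) + h) (m := 2 * h) (by omega),
    mod_eq_ite_of_lt_two_mul hr, mod_eq_ite_of_lt_two_mul hj]
  split_ifs <;> omega

theorem filter_range_two_mul_mod_eq {m i : ℕ} (hi : i < m) :
    (Finset.range (2 * m)).filter (· % m = i) = {i, i + m} := by
  ext n
  simp only [Finset.mem_filter, Finset.mem_range, Finset.mem_insert, Finset.mem_singleton]
  constructor
  · rintro ⟨hn, rfl⟩
    have hq : n / m < 2 := Nat.div_lt_of_lt_mul (by omega)
    have := Nat.div_add_mod n m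
    interval_cases n / m <;> omega
  · rintro (rfl | rfl)
    · exact ⟨by omega, Nat.mod_eq_of_lt hi⟩
    · exact ⟨by omega, by rw [Nat.add_mod_right, Nat.mod_eq_of_lt hi]⟩

end Nat

theorem collatzT_two_mul (k : ℕ) : collatzT (2 * k) = k := by
  unfold collatzT
  split_ifs <;> omega

theorem collatzT_add_two_mul_modEq (n h : ℕ) :
    collatzT (n + 2 * h) ≡ collatzT n + h [MOD 2 * h] := by
  have hcases : collatzT (n + 2 * h) = collatzT n + h ∨
      collatzT (n + 2 * h) = collatzT n + h + 2 * h := by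
    unfold collatzT
    split_ifs <;> omega
  rcases hcases with hT | hT
  · rw [hT]
  · rw [hT]
    exact Nat.add_modEq_right

theorem collatzMatQ_two_mul_apply {h : ℕ} (hh : 0 < h) (i j : Fin (2 * h)) :
    collatzMatQ (2 * h) i j = if collatzT i % h = j % h then 1 else 0 := by
  have hcount : ((Finset.range (2 * (2 * h))).filter
      (fun n => n % (2 * h) = i ∧ collatzT n % (2 * h) = j)).card =
      if collatzT i % h = j % h then 1 else 0 := by
    rw [← Finset.filter_filter, Nat.filter_range_two_mul_mod_eq i.isLt, Finset.card_filter,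
      Finset.sum_pair (by omega), collatzT_add_two_mul_modEq i h]
    exact Nat.ite_mod_two_mul_add_ite_add_mod_two_mul_eq_ite j.isLt
  rw [collatzMatQ, hcount, Nat.cast_ite, Nat.cast_one, Nat.cast_zero]

theorem collatzMat_even_modulus (N : ℕ) (hN : 0 < N) (hev : Even N) :
    (∀ i j : Fin N, collatzMatQ N i j =
      collatzMatQ N i ⟨(j.val + N / 2) % N, Nat.mod_lt _ hN⟩) ∧
    (collatzMatQ N).det = 0 ∧ (collatzMatQ N).rank = N / 2 := by
  obtain ⟨h, rfl⟩ := even_iff_two_dvd.mp hev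
  have hh : 0 < h := by omega
  have hhalf : 2 * h / 2 = h := by omega
  have hC : collatzMatQ (2 * h) = (1 : Matrix (Fin h) (Fin h) ℚ).submatrix
      (fun i : Fin (2 * h) => ⟨collatzT i % h, Nat.mod_lt _ hh⟩)
      (fun j : Fin (2 * h) => ⟨j % h, Nat.mod_lt _ hh⟩) := by
    ext i j
    simp only [collatzMatQ_two_mul_apply hh, Matrix.submatrix_apply, Matrix.one_apply, Fin.mk.injEq]
  have hrank : (collatzMatQ (2 * h)).rank = h := by
    rw [hC, Matrix.rank_one_submatrix_of_surjective, Fintype.card_fin]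
    · exact fun k => ⟨⟨2 * k, by omega⟩,
        Fin.ext (by simp [collatzT_two_mul, Nat.mod_eq_of_lt k.isLt])⟩
    · exact fun k => ⟨⟨k, by omega⟩, Fin.ext (Nat.mod_eq_of_lt k.isLt)⟩
  refine ⟨fun i j => ?_, ?_, by rwa [hhalf]⟩
  · simp only [collatzMatQ_two_mul_apply hh, hhalf,
      Nat.mod_mod_of_dvd _ (dvd_mul_left h 2), Nat.add_mod_right]
  · by_contra hdet
    have := Matrix.rank_of_det_ne_zero hdet
    rw [hrank, Fintype.card_fin] at this
    omega
end

section
/- Let N and N₀ be odd with N₀ | N, and let P_N, P_{N₀} be the characteristic polynomials of the adjacency matrices C_N, C_{N₀} of the modular Collatz graphs. Then P_{N₀}(x) divides P_N(x). -/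
/-- Adjacency matrix (over ℤ) of the modular Collatz graph mod `N`:
`c i j` counts `n ∈ {0,…,2N−1}` with `n ≡ i` and `T n ≡ j (mod N)`. -/
def collatzMat (N : ℕ) : Matrix (Fin N) (Fin N) ℤ :=
  fun i j =>
    (((Finset.range (2 * N)).filter
      (fun n => n % N = i.val ∧ collatzT n % N = j.val)).card : ℤ)

open Matrix

namespace Matrix

variable {m n k p R : Type*}

theorem one_submatrix_id_mul [Fintype m] [DecidableEq m] [NonAssocSemiring R] (f : n → m)
    (A : Matrix m p R) : (1 : Matrix m m R).submatrix f id * A = A.submatrix f id := by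
  simpa using one_submatrix_mul f (Equiv.refl m) A

theorem one_submatrix_add_one_submatrix_eq [DecidableEq m] [AddCommMonoidWithOne R]
    {a₁ a₂ b₁ b₂ : n → m} (h : ∀ i, s(a₁ i, a₂ i) = s(b₁ i, b₂ i)) :
    (1 : Matrix m m R).submatrix a₁ id + (1 : Matrix m m R).submatrix a₂ id =
      (1 : Matrix m m R).submatrix b₁ id + (1 : Matrix m m R).submatrix b₂ id := by
  ext i j
  simp only [add_apply, submatrix_apply]
  rcases Sym2.eq_iff.mp (h i) with ⟨h₁, h₂⟩ | ⟨h₁, h₂⟩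
  · rw [h₁, h₂]
  · rw [h₁, h₂, add_comm]

variable [Fintype m] [Fintype n] [Fintype k] [DecidableEq m] [DecidableEq n] [DecidableEq k]
  [CommRing R]

theorem charpoly_dvd_of_mul_fromRows_one_eq {A : Matrix (m ⊕ k) (m ⊕ k) R} {B : Matrix m m R}
    {Y : Matrix k m R} (h : A * fromRows (1 : Matrix m m R) Y = fromRows 1 Y * B) :
    B.charpoly ∣ A.charpoly := by
  let U : Matrix (m ⊕ k) (m ⊕ k) R := fromCols (fromRows 1 Y) (fromRows 0 1)
  let V : Matrix (m ⊕ k) (m ⊕ k) R := fromBlocks 1 0 (-Y) 1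
  have hUV : U * V = 1 := by simp [U, V, fromBlocks_multiply, fromBlocks_one]
  have hV : V * fromRows (1 : Matrix m m R) Y = fromRows 1 0 := by
    rw [fromBlocks_mul_fromRows]; simp
  let W : Matrix (m ⊕ k) k R := V * A * fromRows (0 : Matrix m k R) 1
  have hVAU : V * A * U = fromBlocks B W.toRows₁ 0 W.toRows₂ := by
    rw [← fromCols_fromRows_eq_fromBlocks, fromRows_toRows, mul_fromCols, Matrix.mul_assoc V, h,
      ← Matrix.mul_assoc, hV, fromRows_mul, Matrix.one_mul, Matrix.zero_mul]
    rfl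
  have hconj : (V * A * U).charpoly = A.charpoly := by
    rw [charpoly_mul_comm, ← mul_assoc, hUV, one_mul]
  rw [← hconj, hVAU, charpoly_fromBlocks_zero₂₁]
  exact dvd_mul_right _ _

theorem charpoly_dvd_of_mul_eq_mul_of_submatrix_eq_one {M : Matrix n n R} {B : Matrix m m R}
    {P : Matrix n m R} {s : m → n} (hs : Function.Injective s) (hP : P.submatrix s id = 1)
    (h : M * P = P * B) : B.charpoly ∣ M.charpoly := by
  classical
  let e : m ⊕ {i // i ∉ Set.range s} ≃ n :=
    (Equiv.sumCongr (Equiv.ofInjective s hs) (Equiv.refl _)).trans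
      (Equiv.sumCompl (· ∈ Set.range s))
  have hPe : P.submatrix e id = fromRows 1 (P.submatrix (e ∘ Sum.inr) id) := by
    ext (a | c) j
    · simpa [e] using congrFun (congrFun hP a) j
    · rfl
  have he : M.submatrix e e * P.submatrix e id = P.submatrix e id * B := by
    rw [submatrix_mul_equiv, h]
    ext
    simp [mul_apply]
  rw [hPe] at he
  rw [← charpoly_reindex e.symm M]
  exact charpoly_dvd_of_mul_fromRows_one_eq he

end Matrix

theorem Nat.filter_range_two_mul_mod_eq_s13 {N i : ℕ} (hi : i < N) :
    (Finset.range (2 * N)).filter (· % N = i) = {i, i + N} := by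
  ext n
  simp only [Finset.mem_filter, Finset.mem_range, Finset.mem_insert, Finset.mem_singleton]
  constructor
  · rintro ⟨hn, rfl⟩
    by_cases h : n < N
    · exact Or.inl (Nat.mod_eq_of_lt h).symm
    · right
      rw [Nat.mod_eq_sub_mod (not_lt.mp h), Nat.mod_eq_of_lt (by omega)]
      omega
  · rintro (rfl | rfl)
    · exact ⟨by omega, Nat.mod_eq_of_lt hi⟩
    · exact ⟨by omega, by rw [Nat.add_mod_right, Nat.mod_eq_of_lt hi]⟩

theorem collatzT_add_two_mul (n t : ℕ) :
    collatzT (n + 2 * t) = collatzT n + if n % 2 = 0 then t else 3 * t := by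
  unfold collatzT
  split_ifs <;> omega

theorem collatzT_add_two_mul_mul_modEq (n M q : ℕ) :
    collatzT (n + 2 * (M * q)) ≡ collatzT n [MOD M] := by
  rw [collatzT_add_two_mul]
  split_ifs
  · simp [Nat.ModEq]
  · simp [Nat.ModEq, show 3 * (M * q) = M * (3 * q) by ring]

theorem collatzT_add_mul_modEq (r M q : ℕ) :
    collatzT (r + M * q) ≡ collatzT (r + M * (q % 2)) [MOD M] := by
  have : r + M * q = r + M * (q % 2) + 2 * (M * (q / 2)) := by
    conv_lhs => rw [← Nat.mod_add_div q 2]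
    ring
  rw [this]
  exact collatzT_add_two_mul_mul_modEq _ _ _

theorem collatzT_lifts_mod {N N₀ : ℕ} (hN : Odd N) (hdvd : N₀ ∣ N) (i : ℕ) :
    s(collatzT i % N₀, collatzT (i + N) % N₀) =
      s(collatzT (i % N₀) % N₀, collatzT (i % N₀ + N₀) % N₀) := by
  obtain ⟨o, rfl⟩ := hdvd
  have ho : o % 2 = 1 := Nat.odd_iff.mp (Nat.Odd.of_mul_right hN)
  set r := i % N₀
  set q := i / N₀
  have hi : i = r + N₀ * q := (Nat.mod_add_div i N₀).symm
  have h₁ : collatzT i % N₀ = collatzT (r + N₀ * (q % 2)) % N₀ := by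
    rw [hi]; exact collatzT_add_mul_modEq r N₀ q
  have h₂ : collatzT (i + N₀ * o) % N₀ = collatzT (r + N₀ * ((q + o) % 2)) % N₀ := by
    rw [hi, add_assoc, ← mul_add]; exact collatzT_add_mul_modEq r N₀ (q + o)
  rw [h₁, h₂]
  rcases Nat.mod_two_eq_zero_or_one q with hq | hq
  · rw [hq, show (q + o) % 2 = 1 by omega]; simp
  · rw [hq, show (q + o) % 2 = 0 by omega]; simp [Sym2.eq_swap]

def collatzStepMod (N t : ℕ) (i : Fin N) : Fin N :=
  ⟨collatzT (i + t * N) % N, Nat.mod_lt _ i.pos⟩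

theorem collatzMat_eq_add (N : ℕ) :
    collatzMat N = (1 : Matrix (Fin N) (Fin N) ℤ).submatrix (collatzStepMod N 0) id +
      (1 : Matrix (Fin N) (Fin N) ℤ).submatrix (collatzStepMod N 1) id := by
  ext i j
  have hne : (i : ℕ) ≠ i + N := by have := i.pos; omega
  rw [collatzMat, ← Finset.filter_filter, Nat.filter_range_two_mul_mod_eq_s13 i.isLt,
    Finset.card_filter, Finset.sum_pair hne]
  simp [collatzStepMod, one_apply, Fin.ext_iff]

theorem collatzMat_mul_one_submatrix {N N₀ : ℕ} (hN : Odd N) (hdvd : N₀ ∣ N)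
    {π : Fin N → Fin N₀} (hπ : ∀ i, (π i : ℕ) = i % N₀) :
    collatzMat N * (1 : Matrix (Fin N₀) (Fin N₀) ℤ).submatrix π id =
      (1 : Matrix (Fin N₀) (Fin N₀) ℤ).submatrix π id * collatzMat N₀ := by
  simp only [collatzMat_eq_add, Matrix.add_mul, one_submatrix_id_mul, submatrix_add,
    Pi.add_apply, submatrix_submatrix, Function.comp_id]
  refine one_submatrix_add_one_submatrix_eq fun i => Sym2.map.injective Fin.val_injective ?_
  simpa [collatzStepMod, hπ, Nat.mod_mod_of_dvd _ hdvd] using collatzT_lifts_mod hN hdvd i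

theorem charpoly_dvd_of_dvd_general (N N₀ : ℕ) (hN : Odd N) (hdvd : N₀ ∣ N) :
    (collatzMat N₀).charpoly ∣ (collatzMat N).charpoly := by
  have hle : N₀ ≤ N := Nat.le_of_dvd hN.pos hdvd
  let π : Fin N → Fin N₀ := fun i => ⟨i % N₀, Nat.mod_lt _ (Nat.pos_of_dvd_of_pos hdvd hN.pos)⟩
  have hsection : π ∘ Fin.castLE hle = id := funext fun a => Fin.ext (Nat.mod_eq_of_lt a.isLt)
  refine charpoly_dvd_of_mul_eq_mul_of_submatrix_eq_one (Fin.castLE_injective hle) ?_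
    (collatzMat_mul_one_submatrix hN hdvd (π := π) fun _ => rfl)
  rw [submatrix_submatrix, hsection, Function.comp_id, submatrix_id_id]

theorem charpoly_dvd_of_dvd (N N₀ : ℕ) (hN : Odd N) (hN₀ : Odd N₀) (hdvd : N₀ ∣ N) :
    (collatzMat N₀).charpoly ∣ (collatzMat N).charpoly :=
  charpoly_dvd_of_dvd_general N N₀ hN hdvd
end

section
/- Let N > 1 be odd. There is an edge pair ν₁ ≡ ν₂ ≡ (N−1)/2 (mod N) with ν₁ even and ν₂ odd but T(ν₁) ≡ T(ν₂) (mod N); precisely, the modular Collatz graph has a strongly double edge from (N−1)/2 to (N−1)/4 if N ≡ 1 (mod 4) and to (3N−1)/4 if N ≡ 3 (mod 4), and these are the only strongly double edges. -/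
/-- A strongly double edge from `a` to `b` in the modular Collatz graph mod `N`. -/
def stronglyDoubleEdge (N : ℕ) (a b : ZMod N) : Prop :=
  ∃ ν₁ ν₂ : ℕ, ν₁ < 2 * N ∧ ν₂ < 2 * N ∧ ν₁ ≠ ν₂ ∧
    (ν₁ : ZMod N) = a ∧ (ν₂ : ZMod N) = a ∧
    ((collatzT ν₁ : ℕ) : ZMod N) = b ∧ ((collatzT ν₂ : ℕ) : ZMod N) = b

lemma collatzT_of_even {n : ℕ} (h : n % 2 = 0) : collatzT n = n / 2 := by
  simp [collatzT, h]

lemma collatzT_of_odd {n : ℕ} (h : n % 2 = 1) : collatzT n = (3 * n + 1) / 2 := by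
  simp [collatzT, h]

/-- Key classification lemma: if the two lifts of `a₀` have congruent images, `a₀ = m`. -/
lemma collatz_key (m a₀ : ℕ) (hm : 1 ≤ m) (ha : a₀ < 2 * m + 1)
    (h : collatzT a₀ ≡ collatzT (a₀ + (2 * m + 1)) [MOD 2 * m + 1]) : a₀ = m := by
  rcases Nat.even_or_odd a₀ with he | ho
  · obtain ⟨c, hc⟩ := he
    have hc2 : a₀ = 2 * c := by omega
    subst hc2
    have h1 : collatzT (2 * c) = c := by
      rw [collatzT_of_even (by omega)]; omega
    have h2 : collatzT (2 * c + (2 * m + 1)) = 3 * c + 3 * m + 2 := by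
      rw [collatzT_of_odd (by omega)]; omega
    rw [h1, h2] at h
    have hd : ((2 * m + 1 : ℕ) : ℤ) ∣ ((3 * c + 3 * m + 2 : ℕ) : ℤ) - (c : ℤ) :=
      h.dvd
    have hd2 : ((2 * m + 1 : ℕ) : ℤ) ∣ ((2 * c : ℤ) - m) := by
      have h3 : ((2 * m + 1 : ℕ) : ℤ) ∣ (2 * ((2 * m + 1 : ℕ) : ℤ)) := ⟨2, by ring⟩
      have := dvd_sub hd h3
      have heq : ((3 * c + 3 * m + 2 : ℕ) : ℤ) - (c : ℤ) - 2 * ((2 * m + 1 : ℕ) : ℤ)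
          = (2 * c : ℤ) - m := by push_cast; ring
      rwa [heq] at this
    have hz : (2 * c : ℤ) - m = 0 := by
      apply Int.eq_zero_of_abs_lt_dvd hd2
      have hcm : c ≤ m := by omega
      rw [abs_lt]
      constructor <;> push_cast <;> omega
    omega
  · obtain ⟨c, hc⟩ := ho
    subst hc
    have h1 : collatzT (2 * c + 1) = 3 * c + 2 := by
      rw [collatzT_of_odd (by omega)]; omega
    have h2 : collatzT (2 * c + 1 + (2 * m + 1)) = c + m + 1 := by
      rw [collatzT_of_even (by omega)]; omega
    rw [h1, h2] at h
    have hd : ((2 * m + 1 : ℕ) : ℤ) ∣ ((c + m + 1 : ℕ) : ℤ) - ((3 * c + 2 : ℕ) : ℤ) :=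
      h.dvd
    have hz : ((c + m + 1 : ℕ) : ℤ) - ((3 * c + 2 : ℕ) : ℤ) = 0 := by
      apply Int.eq_zero_of_abs_lt_dvd hd
      have hcm : 2 * c + 1 ≤ 2 * m - 1 := by omega
      rw [abs_lt]
      constructor <;> push_cast <;> omega
    push_cast at hz
    omega

lemma cast_add_self (N k : ℕ) : ((k + N : ℕ) : ZMod N) = (k : ZMod N) := by
  push_cast
  simp [ZMod.natCast_self]

theorem collatz_strongly_double_edges (N : ℕ) (hN : 1 < N) (hodd : Odd N) :
    (∃ ν₁ ν₂ : ℕ, Even ν₁ ∧ Odd ν₂ ∧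
      (ν₁ : ZMod N) = (((N - 1) / 2 : ℕ) : ZMod N) ∧
      (ν₂ : ZMod N) = (((N - 1) / 2 : ℕ) : ZMod N) ∧
      ((collatzT ν₁ : ℕ) : ZMod N) = ((collatzT ν₂ : ℕ) : ZMod N)) ∧
    (∀ a b : ZMod N, stronglyDoubleEdge N a b ↔
      (a = (((N - 1) / 2 : ℕ) : ZMod N) ∧
        b = if N % 4 = 1 then (((N - 1) / 4 : ℕ) : ZMod N)
            else (((3 * N - 1) / 4 : ℕ) : ZMod N))) := by
  haveI : NeZero N := ⟨by omega⟩
  have hN2 : N % 2 = 1 := Nat.odd_iff.mp hodd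
  obtain ⟨m, hmN⟩ : ∃ m, N = 2 * m + 1 := ⟨N / 2, by omega⟩
  have hm1 : 1 ≤ m := by omega
  have hhalf : (N - 1) / 2 = m := by omega
  -- value of T on the two lifts of m
  have hTm3 : ((collatzT m : ℕ) : ZMod N) = ((collatzT (3 * m + 1) : ℕ) : ZMod N) := by
    rcases Nat.even_or_odd m with he | ho
    · obtain ⟨c, hc⟩ := he
      have hc2 : m = 2 * c := by omega
      have h1 : collatzT m = c := by rw [collatzT_of_even (by omega)]; omega
      have h2 : collatzT (3 * m + 1) = 9 * c + 2 := by
        rw [collatzT_of_odd (by omega)]; omega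
      rw [h1, h2]
      have : (9 * c + 2 : ℕ) = c + 2 * N := by omega
      rw [this]
      push_cast
      simp [ZMod.natCast_self]
    · obtain ⟨c, hc⟩ := ho
      have h1 : collatzT m = 3 * c + 2 := by rw [collatzT_of_odd (by omega)]; omega
      have h2 : collatzT (3 * m + 1) = 3 * c + 2 := by
        rw [collatzT_of_even (by omega)]; omega
      rw [h1, h2]
  have hcast3m : ((3 * m + 1 : ℕ) : ZMod N) = ((m : ℕ) : ZMod N) := by
    have : (3 * m + 1 : ℕ) = m + N := by omega
    rw [this]; exact cast_add_self N m
  -- value of b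
  have hbval : ((collatzT m : ℕ) : ZMod N) =
      (if N % 4 = 1 then (((N - 1) / 4 : ℕ) : ZMod N)
        else (((3 * N - 1) / 4 : ℕ) : ZMod N)) := by
    rcases Nat.even_or_odd m with he | ho
    · obtain ⟨c, hc⟩ := he
      have h1 : collatzT m = c := by rw [collatzT_of_even (by omega)]; omega
      have h4 : N % 4 = 1 := by omega
      rw [h1, if_pos h4]
      congr 1
      omega
    · obtain ⟨c, hc⟩ := ho
      have h1 : collatzT m = 3 * c + 2 := by rw [collatzT_of_odd (by omega)]; omega
      have h4 : ¬ N % 4 = 1 := by omega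
      rw [h1, if_neg h4]
      congr 1
      omega
  constructor
  · -- existence
    rcases Nat.even_or_odd m with he | ho
    · refine ⟨m, 3 * m + 1, he, ?_, by rw [hhalf], ?_, hTm3⟩
      · rcases he with ⟨c, hc⟩
        exact Nat.odd_iff.mpr (by omega)
      · rw [hhalf, hcast3m]
    · refine ⟨3 * m + 1, m, ?_, ho, ?_, by rw [hhalf], hTm3.symm⟩
      · rcases ho with ⟨c, hc⟩
        exact Nat.even_iff.mpr (by omega)
      · rw [hhalf, hcast3m]
  · intro a b
    constructor
    · rintro ⟨ν₁, ν₂, h1, h2, hne, ha1, ha2, hb1, hb2⟩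
      -- classify the lifts
      have hval : ∀ ν : ℕ, ν < 2 * N → (ν : ZMod N) = a → ν = a.val ∨ ν = a.val + N := by
        intro ν hν hcast
        have hv : a.val = ν % N := by rw [← hcast, ZMod.val_natCast]
        by_cases hνN : ν < N
        · left; rw [hv, Nat.mod_eq_of_lt hνN]
        · right
          have h2 : ν - N < N := by omega
          have h3 : ν % N = ν - N := by
            rw [Nat.mod_eq_sub_mod (le_of_not_gt hνN), Nat.mod_eq_of_lt h2]
          omega
      have hav : a.val < N := ZMod.val_lt a
      have key : a.val = m ∧ ((collatzT a.val : ℕ) : ZMod N) = b := by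
        rcases hval ν₁ h1 ha1 with e1 | e1 <;> rcases hval ν₂ h2 ha2 with e2 | e2
        · omega
        · subst e1; subst e2
          have hcong : collatzT a.val ≡ collatzT (a.val + N) [MOD N] :=
            (ZMod.natCast_eq_natCast_iff _ _ _).mp (hb1.trans hb2.symm)
          refine ⟨collatz_key m a.val hm1 (by omega) ?_, hb1⟩
          rw [← hmN]; exact hcong
        · subst e1; subst e2
          have hcong : collatzT a.val ≡ collatzT (a.val + N) [MOD N] :=
            (ZMod.natCast_eq_natCast_iff _ _ _).mp (hb2.trans hb1.symm)
          refine ⟨collatz_key m a.val hm1 (by omega) ?_, hb2⟩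
          rw [← hmN]; exact hcong
        · omega
      obtain ⟨ham, hab⟩ := key
      constructor
      · rw [hhalf, ← ham]
        exact (ZMod.natCast_rightInverse a).symm
      · rw [← hbval, ← hab, ham]
    · rintro ⟨ha, hb⟩
      refine ⟨m, 3 * m + 1, by omega, by omega, by omega, ?_, ?_, ?_, ?_⟩
      · rw [ha, hhalf]
      · rw [ha, hhalf, hcast3m]
      · rw [hb, ← hbval]
      · rw [hb, ← hbval, ← hTm3]
end
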